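/- Let H ∈ (1/2, 1) and let α, β > 0. Then α^{1-2H} f_H^{(1)}(αx) + β^{1-2H} f_H^{(2)}(βx) is asymptotically equivalent to ((α+β)/(αβ))(2H−1) x^{2H−2} as x → +∞; that is, the ratio of the two expressions tends to 1 as x → +∞. -/

import Mathlib

/-!
Integrating by parts, with `r = 2H - 1`,
`f_H^{(1)}(y) = Γ(2H) e^{-y} - y^r + r e^{-y} ∫_0^y e^s s^{r-1} ds` and
`f_H^{(2)}(y) = y^r + r e^y ∫_y^∞ e^{-s} s^{r-1} ds`. After scaling by `α^{-r}` and `β^{-r}`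
the two `x^r` terms cancel, the Gamma term decays exponentially, and both integral terms are
`~ y^{r-1}`. For the second, one more integration by parts leaves a remainder `O(y^{r-2})`.
The first is squeezed between `(1 - e^{-y}) y^{r-1}` (as `s^{r-1} ≥ y^{r-1}` on `(0, y]`) and
an upper bound obtained by splitting at `y - √y`: the factor `e^{-√y}` kills the far part,
and `s^{r-1} ≤ (y - √y)^{r-1} ~ y^{r-1}` on the near part.
Hence the sum is `~ r (α⁻¹ + β⁻¹) x^{r-1}`.
-/

open MeasureTheory Real Filter Finset

/-- `f_H^{(1)}(x) = e^{-x}(Γ(2H) − ∫_0^x e^s s^{2H−1} ds)`. -/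
noncomputable def fH1 (H x : ℝ) : ℝ :=
  Real.exp (-x) * (Real.Gamma (2 * H) - ∫ s in (0:ℝ)..x, Real.exp s * s ^ (2 * H - 1))

/-- `f_H^{(2)}(x) = e^{x}(Γ(2H) − ∫_0^x e^{−s} s^{2H−1} ds)`. -/
noncomputable def fH2 (H x : ℝ) : ℝ :=
  Real.exp x * (Real.Gamma (2 * H) - ∫ s in (0:ℝ)..x, Real.exp (-s) * s ^ (2 * H - 1))

/-- `f_H = f_H^{(1)} + f_H^{(2)}`. -/
noncomputable def fH (H x : ℝ) : ℝ := fH1 H x + fH2 H x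

open Set

open scoped Topology

lemma integrableOn_exp_neg_mul_rpow_Ioi (p : ℝ) {y : ℝ} (hy : 0 < y) :
    IntegrableOn (fun s => exp (-s) * s ^ p) (Ioi y) := by
  refine integrable_of_isBigO_exp_neg one_half_pos ?_ ?_
  · exact fun s hs => ((continuous_exp.comp continuous_neg).continuousAt.mul
      (continuousAt_rpow_const s p (Or.inl (hy.trans_le hs).ne'))).continuousWithinAt
  · refine Asymptotics.isBigO_of_div_tendsto_nhds
      (Eventually.of_forall fun s h => absurd h (exp_pos _).ne') 0 ?_
    refine (tendsto_rpow_mul_exp_neg_mul_atTop_nhds_zero p (1 / 2) one_half_pos).congr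
      fun s => ?_
    simp only [Pi.div_apply, div_eq_mul_inv, ← exp_neg]
    rw [mul_right_comm, ← exp_add]
    ring_nf

lemma integral_exp_mul_rpow {p y : ℝ} (hp : 0 < p) (hy : 0 ≤ y) :
    ∫ s in (0:ℝ)..y, exp s * s ^ p
      = exp y * y ^ p - p * ∫ s in (0:ℝ)..y, exp s * s ^ (p - 1) := by
  have hibp := intervalIntegral.integral_mul_deriv_eq_deriv_mul_of_hasDeriv_right
    (u := exp) (u' := exp) (v := fun s => s ^ p) (v' := fun s => p * s ^ (p - 1))
    continuous_exp.continuousOn (continuousOn_id.rpow_const fun _ _ => Or.inr hp.le)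
    (fun s _ => (hasDerivAt_exp s).hasDerivWithinAt)
    (fun s hs => (hasDerivAt_rpow_const (Or.inl (min_eq_left hy ▸ hs.1).ne')).hasDerivWithinAt)
    (continuous_exp.intervalIntegrable _ _)
    ((intervalIntegral.intervalIntegrable_rpow' (by linarith)).const_mul p)
  simp only [zero_rpow hp.ne', mul_zero, sub_zero, mul_left_comm _ p,
    intervalIntegral.integral_const_mul] at hibp
  linarith

lemma integral_Ioi_exp_neg_mul_rpow (p : ℝ) {y : ℝ} (hy : 0 < y) :
    ∫ s in Ioi y, exp (-s) * s ^ p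
      = exp (-y) * y ^ p + p * ∫ s in Ioi y, exp (-s) * s ^ (p - 1) := by
  have hibp := integral_Ioi_mul_deriv_eq_deriv_mul (a := y) (a' := -(exp (-y) * y ^ p)) (b' := 0)
    (u := fun s => -exp (-s)) (u' := fun s => exp (-s))
    (v := fun s => s ^ p) (v' := fun s => p * s ^ (p - 1))
    (fun s _ => ((hasDerivAt_neg s).exp.neg).congr_deriv (by ring))
    (fun s hs => hasDerivAt_rpow_const (Or.inl (hy.trans hs).ne'))
    (IntegrableOn.congr_fun ((integrableOn_exp_neg_mul_rpow_Ioi (p - 1) hy).const_mul p).neg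
      (fun s _ => by simp only [Pi.mul_apply, Pi.neg_apply]; ring) measurableSet_Ioi)
    (integrableOn_exp_neg_mul_rpow_Ioi p hy) ?_ ?_
  · simp only [mul_left_comm _ p, integral_const_mul, neg_mul, integral_neg] at hibp
    linarith
  · have hc : ContinuousAt ((fun s => -exp (-s)) * fun s => s ^ p) y :=
      (continuous_exp.comp continuous_neg).neg.continuousAt.mul
        (continuousAt_rpow_const y p (Or.inl hy.ne'))
    simpa only [Pi.mul_apply, neg_mul] using hc.tendsto.mono_left nhdsWithin_le_nhds
  · simpa only [neg_mul, neg_zero, one_mul, Pi.mul_def, mul_comm (exp _)] using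
      (tendsto_rpow_mul_exp_neg_mul_atTop_nhds_zero p 1 one_pos).neg

lemma Gamma_add_one_sub_integral_exp_neg_mul_rpow {p y : ℝ} (hp : -1 < p) (hy : 0 ≤ y) :
    Gamma (p + 1) - ∫ s in (0:ℝ)..y, exp (-s) * s ^ p = ∫ s in Ioi y, exp (-s) * s ^ p := by
  have hconv : IntegrableOn (fun s => exp (-s) * s ^ p) (Ioi 0) := by
    simpa using GammaIntegral_convergent (s := p + 1) (by linarith)
  rw [Gamma_eq_integral (by linarith), add_sub_cancel_right,
    ← intervalIntegral.integral_Ioi_sub_Ioi hconv hy]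
  ring

lemma integral_Ioi_exp_neg_mul_rpow_le {q y : ℝ} (hq : q ≤ 0) (hy : 0 < y) :
    ∫ s in Ioi y, exp (-s) * s ^ q ≤ exp (-y) * y ^ q := by
  rw [← integral_exp_neg_Ioi, ← integral_mul_const]
  refine setIntegral_mono_on (integrableOn_exp_neg_mul_rpow_Ioi q hy)
    ((integrableOn_exp_neg_Ioi y).mul_const _) measurableSet_Ioi fun s hs => ?_
  exact mul_le_mul_of_nonneg_left (rpow_le_rpow_of_nonpos hy (le_of_lt hs) hq) (exp_pos _).le

lemma tendsto_exp_mul_integral_Ioi_exp_neg_mul_rpow_div_rpow {c : ℝ} (hc : c ≤ 1) :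
    Tendsto (fun y => exp y * (∫ s in Ioi y, exp (-s) * s ^ c) / y ^ c) atTop (𝓝 1) := by
  set g : ℝ → ℝ := fun y => exp y * (∫ s in Ioi y, exp (-s) * s ^ (c - 1)) / y ^ c
  have hg : Tendsto g atTop (𝓝 0) := by
    refine tendsto_of_tendsto_of_tendsto_of_le_of_le' tendsto_const_nhds tendsto_inv_atTop_zero
      ?_ ?_
    · filter_upwards [eventually_gt_atTop 0] with y hy
      have : 0 ≤ ∫ s in Ioi y, exp (-s) * s ^ (c - 1) := setIntegral_nonneg measurableSet_Ioi
        fun s (hs : y < s) => mul_nonneg (exp_pos _).le (rpow_nonneg (hy.trans hs).le _)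
      positivity
    · filter_upwards [eventually_gt_atTop 0] with y hy
      calc g y ≤ exp y * (exp (-y) * y ^ (c - 1)) / y ^ c := by
            simp only [g]
            gcongr
            exact integral_Ioi_exp_neg_mul_rpow_le (by linarith) hy
        _ = y⁻¹ := by
            rw [← mul_assoc, ← exp_add, add_neg_cancel, exp_zero, one_mul, rpow_sub_one hy.ne']
            field_simp
  have hlim := (hg.const_mul c).const_add 1
  rw [mul_zero, add_zero] at hlim
  refine hlim.congr' ?_
  filter_upwards [eventually_gt_atTop 0] with y hy
  rw [integral_Ioi_exp_neg_mul_rpow c hy, mul_add, ← mul_assoc, ← exp_add, add_neg_cancel,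
    exp_zero, one_mul]
  simp only [g]
  field_simp

section
variable {c : ℝ}

lemma intervalIntegrable_exp_mul_rpow (hc : -1 < c) (a b : ℝ) :
    IntervalIntegrable (fun s => exp s * s ^ c) volume a b :=
  (intervalIntegral.intervalIntegrable_rpow' hc).continuousOn_mul continuous_exp.continuousOn

lemma one_sub_exp_neg_le_exp_neg_mul_integral_exp_mul_rpow_div (hc : -1 < c) (hc0 : c ≤ 0)
    {y : ℝ} (hy : 0 < y) :
    1 - exp (-y) ≤ exp (-y) * (∫ s in (0:ℝ)..y, exp s * s ^ c) / y ^ c := by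
  have hmono : ∫ s in (0:ℝ)..y, exp s * y ^ c ≤ ∫ s in (0:ℝ)..y, exp s * s ^ c :=
    intervalIntegral.integral_mono_on_of_le_Ioo hy.le
      ((continuous_exp.intervalIntegrable _ _).mul_const _)
      (intervalIntegrable_exp_mul_rpow hc _ _)
      fun s hs => mul_le_mul_of_nonneg_left (rpow_le_rpow_of_nonpos hs.1 hs.2.le hc0)
        (exp_pos s).le
  rw [intervalIntegral.integral_mul_const, integral_exp, exp_zero] at hmono
  rw [le_div_iff₀ (rpow_pos_of_pos hy c)]
  calc (1 - exp (-y)) * y ^ c = exp (-y) * ((exp y - 1) * y ^ c) := by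
        rw [show exp (-y) * ((exp y - 1) * y ^ c) = (exp (-y) * exp y - exp (-y)) * y ^ c by
          ring, ← exp_add, neg_add_cancel, exp_zero]
    _ ≤ _ := by gcongr

lemma exp_neg_mul_integral_exp_mul_rpow_div_le (hc : -1 < c) (hc0 : c ≤ 0) {d y : ℝ}
    (hd : 0 ≤ d) (hdy : d < y) :
    exp (-y) * (∫ s in (0:ℝ)..y, exp s * s ^ c) / y ^ c
      ≤ exp (-d) * y / (c + 1) + ((y - d) / y) ^ c := by
  have hy : 0 < y := hd.trans_lt hdy
  have hyd : 0 < y - d := by linarith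
  have hfar : ∫ s in (0:ℝ)..(y - d), exp s * s ^ c
      ≤ exp (y - d) * (y ^ (c + 1) / (c + 1)) := by
    calc ∫ s in (0:ℝ)..(y - d), exp s * s ^ c
        ≤ ∫ s in (0:ℝ)..(y - d), exp (y - d) * s ^ c := by
          refine intervalIntegral.integral_mono_on hyd.le
            (intervalIntegrable_exp_mul_rpow hc _ _)
            ((intervalIntegral.intervalIntegrable_rpow' hc).const_mul _) fun s hs => ?_
          exact mul_le_mul_of_nonneg_right (exp_le_exp.2 hs.2) (rpow_nonneg hs.1 c)
      _ ≤ exp (y - d) * (y ^ (c + 1) / (c + 1)) := by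
          rw [intervalIntegral.integral_const_mul, integral_rpow (Or.inl hc),
            zero_rpow (by linarith), sub_zero]
          have := rpow_le_rpow hyd.le (show y - d ≤ y by linarith) (show 0 ≤ c + 1 by linarith)
          gcongr
          linarith
  have hnear : ∫ s in (y - d)..y, exp s * s ^ c ≤ exp y * (y - d) ^ c := by
    calc ∫ s in (y - d)..y, exp s * s ^ c ≤ ∫ s in (y - d)..y, exp s * (y - d) ^ c := by
          refine intervalIntegral.integral_mono_on (by linarith)
            (intervalIntegrable_exp_mul_rpow hc _ _)
            ((continuous_exp.intervalIntegrable _ _).mul_const _) fun s hs => ?_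
          exact mul_le_mul_of_nonneg_left (rpow_le_rpow_of_nonpos hyd hs.1 hc0) (exp_pos s).le
      _ ≤ exp y * (y - d) ^ c := by
          rw [intervalIntegral.integral_mul_const, integral_exp]
          nlinarith [exp_pos (y - d), rpow_nonneg hyd.le c]
  rw [← intervalIntegral.integral_add_adjacent_intervals
    (intervalIntegrable_exp_mul_rpow hc 0 (y - d)) (intervalIntegrable_exp_mul_rpow hc (y - d) y)]
  calc exp (-y) * ((∫ s in (0:ℝ)..(y - d), exp s * s ^ c) + ∫ s in (y - d)..y, exp s * s ^ c)
        / y ^ c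
      ≤ exp (-y) * (exp (y - d) * (y ^ (c + 1) / (c + 1)) + exp y * (y - d) ^ c) / y ^ c := by
        gcongr
    _ = exp (-d) * y / (c + 1) + ((y - d) / y) ^ c := by
        have hexp : exp (-y) * exp (y - d) = exp (-d) := by rw [← exp_add]; ring_nf
        rw [show ∀ A B : ℝ, exp (-y) * (exp (y - d) * A + exp y * B) / y ^ c
            = exp (-y) * exp (y - d) * (A / y ^ c) + exp (-y) * exp y * (B / y ^ c) by
              intros; ring,
          hexp, ← exp_add, neg_add_cancel, exp_zero, one_mul, div_rpow hyd.le hy.le,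
          rpow_add_one hy.ne']
        field_simp

lemma tendsto_exp_neg_mul_integral_exp_mul_rpow_div_rpow (hc : -1 < c) (hc0 : c ≤ 0) :
    Tendsto (fun y => exp (-y) * (∫ s in (0:ℝ)..y, exp s * s ^ c) / y ^ c) atTop (𝓝 1) := by
  have hlower : Tendsto (fun y : ℝ => 1 - exp (-y)) atTop (𝓝 1) := by
    simpa using tendsto_exp_neg_atTop_nhds_zero.const_sub 1
  have hfar : Tendsto (fun y => exp (-√y) * y / (c + 1)) atTop (𝓝 0) := by
    have h := ((tendsto_rpow_mul_exp_neg_mul_atTop_nhds_zero 2 1 one_pos).comp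
      tendsto_sqrt_atTop).div_const (c + 1)
    rw [zero_div] at h
    refine h.congr' ?_
    filter_upwards [eventually_ge_atTop 0] with y hy
    simp [sq_sqrt hy, mul_comm]
  have hnear : Tendsto (fun y => ((y - √y) / y) ^ c) atTop (𝓝 1) := by
    have h := (tendsto_inv_atTop_zero.comp tendsto_sqrt_atTop).const_sub 1
    rw [sub_zero] at h
    have h' := ((continuousAt_rpow_const 1 c (Or.inl one_ne_zero)).tendsto.comp h)
    rw [one_rpow] at h'
    refine h'.congr' ?_
    filter_upwards [eventually_gt_atTop 0] with y hy
    rw [Function.comp_apply, Function.comp_apply, sub_div, div_self hy.ne', sqrt_div_self]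
  have hupper := hfar.add hnear
  rw [zero_add] at hupper
  refine tendsto_of_tendsto_of_tendsto_of_le_of_le' hlower hupper ?_ ?_
  · filter_upwards [eventually_gt_atTop 0] with y hy
    exact one_sub_exp_neg_le_exp_neg_mul_integral_exp_mul_rpow_div hc hc0 hy
  · filter_upwards [eventually_gt_atTop 1] with y hy
    exact exp_neg_mul_integral_exp_mul_rpow_div_le hc hc0 (sqrt_nonneg y)
      (sqrt_lt_self_iff.2 hy)

end

lemma tendsto_comp_const_mul_div_rpow {F : ℝ → ℝ} {a c : ℝ} (ha : 0 < a)
    (hF : Tendsto (fun y => F y / y ^ c) atTop (𝓝 1)) :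
    Tendsto (fun x => F (a * x) / x ^ c) atTop (𝓝 (a ^ c)) := by
  have h := (hF.comp (tendsto_id.const_mul_atTop ha)).const_mul (a ^ c)
  rw [mul_one] at h
  refine h.congr' ?_
  filter_upwards [eventually_gt_atTop 0] with x hx
  rw [Function.comp_apply, id, mul_rpow ha.le hx.le]
  field_simp

lemma tendsto_exp_neg_mul_div_rpow {a : ℝ} (ha : 0 < a) (c : ℝ) :
    Tendsto (fun x => exp (-(a * x)) / x ^ c) atTop (𝓝 0) := by
  refine (tendsto_rpow_mul_exp_neg_mul_atTop_nhds_zero (-c) a ha).congr' ?_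
  filter_upwards [eventually_gt_atTop 0] with x hx
  rw [rpow_neg hx.le, neg_mul]
  ring

lemma fH1_eq {H y : ℝ} (hH : 1 / 2 < H) (hy : 0 ≤ y) :
    fH1 H y = Gamma (2 * H) * exp (-y) - y ^ (2 * H - 1)
      + (2 * H - 1) * (exp (-y) * ∫ s in (0:ℝ)..y, exp s * s ^ (2 * H - 1 - 1)) := by
  have hexp : exp (-y) * exp y = 1 := by rw [← exp_add, neg_add_cancel, exp_zero]
  rw [fH1, integral_exp_mul_rpow (by linarith) hy]
  linear_combination (-y ^ (2 * H - 1)) * hexp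

lemma fH2_eq {H y : ℝ} (hH : 0 < H) (hy : 0 < y) :
    fH2 H y = y ^ (2 * H - 1)
      + (2 * H - 1) * (exp y * ∫ s in Ioi y, exp (-s) * s ^ (2 * H - 1 - 1)) := by
  have hexp : exp y * exp (-y) = 1 := by rw [← exp_add, add_neg_cancel, exp_zero]
  rw [fH2, show 2 * H = 2 * H - 1 + 1 by ring, add_sub_cancel_right,
    Gamma_add_one_sub_integral_exp_neg_mul_rpow (by linarith) hy.le,
    integral_Ioi_exp_neg_mul_rpow _ hy]
  linear_combination y ^ (2 * H - 1) * hexp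

lemma rpow_mul_fH1_add_rpow_mul_fH2 {H α β x : ℝ} (hH : 1 / 2 < H) (hα : 0 < α) (hβ : 0 < β)
    (hx : 0 < x) :
    α ^ (1 - 2 * H) * fH1 H (α * x) + β ^ (1 - 2 * H) * fH2 H (β * x)
      = α ^ (1 - 2 * H) * Gamma (2 * H) * exp (-(α * x))
        + (2 * H - 1) * α ^ (1 - 2 * H)
          * (exp (-(α * x)) * ∫ s in (0:ℝ)..(α * x), exp s * s ^ (2 * H - 1 - 1))
        + (2 * H - 1) * β ^ (1 - 2 * H)
          * (exp (β * x) * ∫ s in Ioi (β * x), exp (-s) * s ^ (2 * H - 1 - 1)) := by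
  have hscale : ∀ {a : ℝ}, 0 < a →
      a ^ (1 - 2 * H) * (a * x) ^ (2 * H - 1) = x ^ (2 * H - 1) := fun ha => by
    rw [mul_rpow ha.le hx.le, ← mul_assoc, ← rpow_add ha, sub_add_sub_cancel', sub_self,
      rpow_zero, one_mul]
  rw [fH1_eq hH (by positivity), fH2_eq (by linarith) (by positivity)]
  linear_combination hscale hβ - hscale hα

lemma tendsto_rpow_mul_fH1_add_rpow_mul_fH2_div_rpow {H α β : ℝ}
    (hH : H ∈ Ioo (1 / 2 : ℝ) 1) (hα : 0 < α) (hβ : 0 < β) :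
    Tendsto (fun x => (α ^ (1 - 2 * H) * fH1 H (α * x) + β ^ (1 - 2 * H) * fH2 H (β * x))
      / x ^ (2 * H - 2)) atTop (𝓝 ((2 * H - 1) * (α⁻¹ + β⁻¹))) := by
  have hL := tendsto_comp_const_mul_div_rpow hα
    (tendsto_exp_neg_mul_integral_exp_mul_rpow_div_rpow (c := 2 * H - 2) (by linarith [hH.1])
      (by linarith [hH.2]))
  have hU := tendsto_comp_const_mul_div_rpow hβ
    (tendsto_exp_mul_integral_Ioi_exp_neg_mul_rpow_div_rpow (c := 2 * H - 2)
      (by linarith [hH.2]))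
  have hsum := (((tendsto_exp_neg_mul_div_rpow hα (2 * H - 2)).const_mul
    (α ^ (1 - 2 * H) * Gamma (2 * H))).add (hL.const_mul ((2 * H - 1) * α ^ (1 - 2 * H)))).add
    (hU.const_mul ((2 * H - 1) * β ^ (1 - 2 * H)))
  have hinv : ∀ {a : ℝ}, 0 < a → a ^ (1 - 2 * H) * a ^ (2 * H - 2) = a⁻¹ := fun ha => by
    rw [← rpow_add ha, show 1 - 2 * H + (2 * H - 2) = -1 by ring, rpow_neg_one]
  rw [mul_zero, zero_add, mul_assoc, hinv hα, mul_assoc, hinv hβ, ← mul_add] at hsum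
  refine hsum.congr' ?_
  filter_upwards [eventually_gt_atTop 0] with x hx
  rw [rpow_mul_fH1_add_rpow_mul_fH2 hH.1 hα hβ hx, show 2 * H - 1 - 1 = 2 * H - 2 by ring]
  ring

theorem stmt_1 (H α β : ℝ) (hH : H ∈ Set.Ioo (1/2 : ℝ) 1) (hα : 0 < α) (hβ : 0 < β) :
    Filter.Tendsto
      (fun x : ℝ =>
        (α ^ (1 - 2 * H) * fH1 H (α * x) + β ^ (1 - 2 * H) * fH2 H (β * x)) /
          ((α + β) / (α * β) * (2 * H - 1) * x ^ (2 * H - 2)))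
      Filter.atTop (nhds 1) := by
  have hK : (α + β) / (α * β) * (2 * H - 1) ≠ 0 := by
    have : 0 < 2 * H - 1 := by linarith [hH.1]
    positivity
  have hlim := (tendsto_rpow_mul_fH1_add_rpow_mul_fH2_div_rpow hH hα hβ).div_const
    ((α + β) / (α * β) * (2 * H - 1))
  rw [show (2 * H - 1) * (α⁻¹ + β⁻¹) = (α + β) / (α * β) * (2 * H - 1) by
    field_simp; ring, div_self hK] at hlim
  exact hlim.congr fun x => by rw [div_div, mul_comm (x ^ _)]
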